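/- For every base B: if ⊩+_B ⊥ then ⊩+_B χ and ⊩−_B χ for every formula χ. -/

import Mathlib

/-- Signs: `pos` for proof/assertion, `neg` for refutation/rejection. -/
inductive Sign where
  | pos
  | neg
deriving DecidableEq

/-- The dual of a sign. -/
def Sign.dual : Sign → Sign
  | .pos => .neg
  | .neg => .pos

/-- Formulas of the bilateral logic 2Int. -/
inductive Form where
  | atom : ℕ → Form
  | bot : Form
  | top : Form
  | and : Form → Form → Form
  | or : Form → Form → Form
  | imp : Form → Form → Form
  | coimp : Form → Form → Form
deriving DecidableEq

/-- A premise of an atomic rule: the sign required (proof or refutation), the premise atom,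
and the sets of dischargeable atomic proof assumptions and refutation assumptions. -/
structure Premise where
  sign : Sign
  concl : ℕ
  dischargePf : Set ℕ
  dischargeRf : Set ℕ

/-- An atomic rule: a list of premises, a marking as proof (`pos`) or refutation (`neg`) rule,
and an atomic conclusion. -/
structure AtomicRule where
  prems : List Premise
  sign : Sign
  concl : ℕ

/-- A bilateral atomic system (base) is a set of atomic rules. -/
abbrev Base := Set AtomicRule

/-- `AtDeriv B s Γ Δ p` formalizes `Γ;Δ ⊢^s_B p`: there is a deduction in `B` of the atom `p`
whose open atomic proof assumptions are contained in `Γ` and open atomic refutation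
assumptions in `Δ`, consisting of a single assumption of sign `s` or ending with a rule of
sign `s`. -/
inductive AtDeriv (B : Base) : Sign → Set ℕ → Set ℕ → ℕ → Prop
  | hypPos {Γ Δ : Set ℕ} {p : ℕ} : p ∈ Γ → AtDeriv B .pos Γ Δ p
  | hypNeg {Γ Δ : Set ℕ} {p : ℕ} : p ∈ Δ → AtDeriv B .neg Γ Δ p
  | app {Γ Δ : Set ℕ} {R : AtomicRule} (hR : R ∈ B)
      (h : ∀ pr ∈ R.prems,
        AtDeriv B pr.sign (Γ ∪ pr.dischargePf) (Δ ∪ pr.dischargeRf) pr.concl) :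
      AtDeriv B R.sign Γ Δ R.concl

/-- Bilateral validity (support) `⊩^s_B φ`, by recursion on the formula. -/
def Supp : Form → Base → Sign → Prop
  | .atom p, B, s => AtDeriv B s ∅ ∅ p
  | .bot, B, .pos => ∀ p : ℕ, AtDeriv B .pos ∅ ∅ p ∧ AtDeriv B .neg ∅ ∅ p
  | .bot, _, .neg => True
  | .top, _, .pos => True
  | .top, B, .neg => ∀ p : ℕ, AtDeriv B .pos ∅ ∅ p ∧ AtDeriv B .neg ∅ ∅ p
  | .and φ ψ, B, .pos => Supp φ B .pos ∧ Supp ψ B .pos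
  | .and φ ψ, B, .neg => ∀ C : Base, B ⊆ C → ∀ p : ℕ,
      (((∀ D : Base, C ⊆ D → Supp φ D .neg → AtDeriv D .pos ∅ ∅ p) ∧
        (∀ D : Base, C ⊆ D → Supp ψ D .neg → AtDeriv D .pos ∅ ∅ p)) →
        AtDeriv C .pos ∅ ∅ p) ∧
      (((∀ D : Base, C ⊆ D → Supp φ D .neg → AtDeriv D .neg ∅ ∅ p) ∧
        (∀ D : Base, C ⊆ D → Supp ψ D .neg → AtDeriv D .neg ∅ ∅ p)) →
        AtDeriv C .neg ∅ ∅ p)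
  | .or φ ψ, B, .pos => ∀ C : Base, B ⊆ C → ∀ p : ℕ,
      (((∀ D : Base, C ⊆ D → Supp φ D .pos → AtDeriv D .pos ∅ ∅ p) ∧
        (∀ D : Base, C ⊆ D → Supp ψ D .pos → AtDeriv D .pos ∅ ∅ p)) →
        AtDeriv C .pos ∅ ∅ p) ∧
      (((∀ D : Base, C ⊆ D → Supp φ D .pos → AtDeriv D .neg ∅ ∅ p) ∧
        (∀ D : Base, C ⊆ D → Supp ψ D .pos → AtDeriv D .neg ∅ ∅ p)) →
        AtDeriv C .neg ∅ ∅ p)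
  | .or φ ψ, B, .neg => Supp φ B .neg ∧ Supp ψ B .neg
  | .imp φ ψ, B, .pos => ∀ C : Base, B ⊆ C → Supp φ C .pos → Supp ψ C .pos
  | .imp φ ψ, B, .neg => Supp φ B .pos ∧ Supp ψ B .neg
  | .coimp φ ψ, B, .pos => Supp φ B .pos ∧ Supp ψ B .neg
  | .coimp φ ψ, B, .neg => ∀ C : Base, B ⊆ C → Supp ψ C .neg → Supp φ C .neg

/-!
`⊩+_B ⊥` says that every atom is both provable and refutable in `B`, and this persists to every
extension of `B`. In such a base every clause of the support relation is satisfied, by induction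
on the formula: the clauses for `∧−` and `∨+` conclude with an atomic derivation, which exists
outright, and the clauses for `→+` and `↤−` only require the consequent to be supported in an
extension, which the induction hypothesis provides.
-/

lemma AtDeriv.mono {B C : Base} (hBC : B ⊆ C) {s : Sign} {Γ Δ : Set ℕ} {p : ℕ}
    (h : AtDeriv B s Γ Δ p) : AtDeriv C s Γ Δ p := by
  induction h with
  | hypPos h => exact .hypPos h
  | hypNeg h => exact .hypNeg h
  | app hR _ ih => exact .app (hBC hR) ih

lemma atDeriv_of_supp_bot {B : Base} (h : Supp .bot B .pos) (s : Sign) (p : ℕ) :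
    AtDeriv B s ∅ ∅ p := by
  cases s
  exacts [(h p).1, (h p).2]

lemma supp_of_forall_atDeriv (χ : Form) {B : Base} (h : ∀ s p, AtDeriv B s ∅ ∅ p) :
    Supp χ B .pos ∧ Supp χ B .neg := by
  induction χ generalizing B with
  | atom p => exact ⟨h .pos p, h .neg p⟩
  | bot => exact ⟨fun p => ⟨h .pos p, h .neg p⟩, trivial⟩
  | top => exact ⟨trivial, fun p => ⟨h .pos p, h .neg p⟩⟩
  | and φ ψ ihφ ihψ =>
    refine ⟨⟨(ihφ h).1, (ihψ h).1⟩, fun C hBC p => ?_⟩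
    exact ⟨fun _ => (h .pos p).mono hBC, fun _ => (h .neg p).mono hBC⟩
  | or φ ψ ihφ ihψ =>
    refine ⟨fun C hBC p => ?_, ⟨(ihφ h).2, (ihψ h).2⟩⟩
    exact ⟨fun _ => (h .pos p).mono hBC, fun _ => (h .neg p).mono hBC⟩
  | imp φ ψ ihφ ihψ =>
    exact ⟨fun C hBC _ => (ihψ fun s p => (h s p).mono hBC).1, (ihφ h).1, (ihψ h).2⟩
  | coimp φ ψ ihφ ihψ =>
    exact ⟨⟨(ihφ h).1, (ihψ h).2⟩, fun C hBC _ => (ihφ fun s p => (h s p).mono hBC).2⟩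

theorem ex_falso_bot (B : Base) (h : Supp .bot B .pos) (χ : Form) :
    Supp χ B .pos ∧ Supp χ B .neg :=
  supp_of_forall_atDeriv χ (atDeriv_of_supp_bot h)
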